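/- arXiv:2405.11084 — 5 statements merged into one kernel-verified Lean document; each statement's English description precedes it below -/
import Mathlib

section
/- Assume that for every sufficiently large t there is a prime in the interval (t, α·t) for every fixed α > 1 (a consequence of the Prime Number Theorem). Then for every nonzero real y there exists t₀ > 0 such that for all t ≥ t₀ there is a prime p with t < p < e^{π/|y|}·t and |p^{-iy} - 1| > 1/√2. -/
/-! With α = exp (π / (4|y|)) the hypothesis puts, far enough out, a prime p with |y| log p in
any window (x, x + π/4), and then a second prime q with |y| log q - |y| log p ∈ (π/2, 3π/4).
These two angles cannot both have cosine ≥ 3/4, because cos θ ≥ 3/4 forces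
|sin θ| ≤ √7/4 < 3/4. Finally ‖e^{-iθ} - 1‖² = 2 - 2 cos θ, which exceeds 1/2 exactly when
cos θ < 3/4. -/

open Real

theorem Real.cos_lt_or_cos_add_pi_div_two_add_lt {c : ℝ} (hc : 0 < c) (hc2 : 1 ≤ 2 * c ^ 2)
    (θ : ℝ) {δ : ℝ} (hδ₀ : 0 < δ) (hδ : δ < π / 2) :
    cos θ < c ∨ cos (θ + π / 2 + δ) < c := by
  refine or_iff_not_imp_left.2 fun hθ => ?_
  have hsin : 0 < sin δ := sin_pos_of_pos_of_lt_pi hδ₀ (by linarith)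
  have hcos : 0 < cos δ := cos_pos_of_mem_Ioo ⟨by linarith, hδ⟩
  have hsinθ : |sin θ| ≤ c :=
    abs_le_of_sq_le_sq (by nlinarith [sin_sq_add_cos_sq θ]) hc.le
  have hprod : |sin θ * cos δ| ≤ c := by
    rw [abs_mul, abs_of_pos hcos]
    exact (mul_le_of_le_one_right (abs_nonneg _) (cos_le_one δ)).trans hsinθ
  rw [cos_add, cos_add_pi_div_two, sin_add_pi_div_two]
  nlinarith [neg_abs_le (sin θ * cos δ)]

theorem one_div_sqrt_two_lt_norm_exp_I_mul_ofReal_sub_one {x : ℝ} (hx : cos x < 3 / 4) :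
    1 / √2 < ‖Complex.exp (Complex.I * x) - 1‖ := by
  have hcos := cos_two_mul (x / 2)
  rw [mul_div_cancel₀ x two_ne_zero] at hcos
  rw [Complex.norm_exp_I_mul_ofReal_sub_one, Real.norm_eq_abs]
  refine lt_of_pow_lt_pow_left₀ 2 (abs_nonneg _) ?_
  rw [sq_abs, div_pow, sq_sqrt zero_le_two]
  nlinarith [sin_sq_add_cos_sq (x / 2)]

theorem exists_prime_log_mem_Ioo
    (hPNT : ∀ α : ℝ, 1 < α → ∃ T : ℝ, ∀ t ≥ T, ∃ p : ℕ, p.Prime ∧ t < p ∧ (p : ℝ) < α * t)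
    {ε : ℝ} (hε : 0 < ε) : ∃ X, ∀ x ≥ X, ∃ p : ℕ, p.Prime ∧ log p ∈ Set.Ioo x (x + ε) := by
  obtain ⟨T, hT⟩ := hPNT (exp ε) (one_lt_exp_iff.2 hε)
  refine ⟨log (max T 1), fun x hx => ?_⟩
  have hTx : max T 1 ≤ exp x := (log_le_iff_le_exp (by positivity)).1 hx
  obtain ⟨p, hp, hxp, hpx⟩ := hT (exp x) ((le_max_left _ _).trans hTx)
  have hp₀ : (0 : ℝ) < p := (exp_pos x).trans hxp
  refine ⟨p, hp, (lt_log_iff_exp_lt hp₀).2 hxp, (log_lt_iff_lt_exp hp₀).2 ?_⟩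
  rwa [exp_add, mul_comm]

theorem exists_prime_log_mem_Ioo_cos_lt
    (hPNT : ∀ α : ℝ, 1 < α → ∃ T : ℝ, ∀ t ≥ T, ∃ p : ℕ, p.Prime ∧ t < p ∧ (p : ℝ) < α * t)
    {a : ℝ} (ha : 0 < a) :
    ∃ X, ∀ x ≥ X, ∃ p : ℕ, p.Prime ∧ log p ∈ Set.Ioo x (x + π / a) ∧ cos (a * log p) < 3 / 4 := by
  set ε := π / a / 4 with hε
  have hε₀ : 0 < ε := by positivity
  have haε : a * ε = π / 4 := by rw [hε]; field_simp
  obtain ⟨X, hX⟩ := exists_prime_log_mem_Ioo hPNT hε₀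
  refine ⟨X, fun x hx => ?_⟩
  obtain ⟨p, hp, hxp, hpx⟩ := hX x hx
  obtain ⟨q, hq, hpq, hqp⟩ := hX (log p + 2 * ε) (by linarith)
  rcases Real.cos_lt_or_cos_add_pi_div_two_add_lt (c := 3 / 4) (by norm_num) (by norm_num)
    (a * log p) (δ := a * log q - (a * log p + π / 2)) (by nlinarith) (by nlinarith) with h | h
  · exact ⟨p, hp, ⟨hxp, by linarith⟩, h⟩
  · refine ⟨q, hq, ⟨by linarith, by linarith⟩, ?_⟩
    rwa [add_sub_cancel] at h

theorem prime_find
    (hPNT : ∀ α : ℝ, 1 < α → ∃ T : ℝ, ∀ t ≥ T, ∃ p : ℕ, p.Prime ∧ t < p ∧ (p : ℝ) < α * t)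
    (y : ℝ) (hy : y ≠ 0) :
    ∃ t₀ > (0 : ℝ), ∀ t ≥ t₀, ∃ p : ℕ, p.Prime ∧ t < p ∧ (p : ℝ) < Real.exp (π / |y|) * t ∧
      1 / Real.sqrt 2 < ‖Complex.exp (-(Complex.I * y) * Real.log p) - 1‖ := by
  obtain ⟨X, hX⟩ := exists_prime_log_mem_Ioo_cos_lt hPNT (abs_pos.2 hy)
  refine ⟨exp X, exp_pos X, fun t ht => ?_⟩
  have ht₀ : 0 < t := (exp_pos X).trans_le ht
  obtain ⟨p, hp, ⟨htp, hpt⟩, hcos⟩ := hX (log t) ((le_log_iff_exp_le ht₀).2 ht)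
  have hp₀ : (0 : ℝ) < p := by exact_mod_cast hp.pos
  refine ⟨p, hp, (log_lt_log_iff ht₀ hp₀).1 htp, ?_, ?_⟩
  · rwa [log_lt_iff_lt_exp hp₀, exp_add, exp_log ht₀, mul_comm] at hpt
  · have harg : -(Complex.I * y) * Real.log p = Complex.I * ↑(-(y * Real.log p)) := by
      push_cast; ring
    rw [harg]
    refine one_div_sqrt_two_lt_norm_exp_I_mul_ofReal_sub_one ?_
    rwa [← cos_abs, abs_neg, abs_mul, abs_of_nonneg (log_natCast_nonneg p)]
end

section
/- Let x ≥ 10 and c := 1 + 1/log x. Then the sum over positive integers n with n ≤ (2/3)x or n ≥ (4/3)x of (log n)/(n^c · |log(x/n)|) is O(log² x), with an absolute implied constant. -/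
/-!
Away from `n ≈ x` the factor `|log (x / n)|` is at least `log (4 / 3)`, and `log n ≤ n ^ ε / ε`
for every `ε > 0`. With `L = log x` and `ε = 1 / (2L)` each term is therefore at most
`(2L / log (4 / 3)) · n ^ (-(1 + 1 / (2L)))`, and `∑ n ^ (-s) ≤ 1 + 1 / (s - 1) = 1 + 2L`.
-/

open Real

lemma one_quarter_le_log_four_thirds : 1 / 4 ≤ log (4 / 3) := by
  have := one_sub_inv_le_log_of_pos (x := 4 / 3) (by norm_num)
  norm_num at this ⊢
  linarith

lemma log_four_thirds_le_abs_log_div {x y : ℝ} (hx : 0 < x) (hy : 0 < y)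
    (h : y ≤ 2 / 3 * x ∨ 4 / 3 * x ≤ y) : log (4 / 3) ≤ |log (x / y)| := by
  rcases h with h | h
  · refine (log_le_log (by norm_num) ?_).trans (le_abs_self _)
    rw [le_div_iff₀ hy]
    linarith
  · rw [← abs_neg, ← log_inv, inv_div]
    refine (log_le_log (by norm_num) ?_).trans (le_abs_self _)
    rw [le_div_iff₀ hx]
    linarith

lemma log_div_rpow_mul_abs_log_le {x c ε : ℝ} (hx : 0 < x) (hε : 0 < ε) (n : ℕ)
    (h : (n : ℝ) ≤ 2 / 3 * x ∨ 4 / 3 * x ≤ n) :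
    log n / ((n : ℝ) ^ c * |log (x / n)|) ≤ (ε * log (4 / 3))⁻¹ * (n : ℝ) ^ (ε - c) := by
  have hlog : 0 < log (4 / 3) := by linarith [one_quarter_le_log_four_thirds]
  rcases n.eq_zero_or_pos with rfl | hn
  · simp only [Nat.cast_zero, log_zero, zero_div]
    positivity
  have hn : (0 : ℝ) < n := by exact_mod_cast hn
  calc log n / ((n : ℝ) ^ c * |log (x / n)|)
      ≤ (n ^ ε / ε) / ((n : ℝ) ^ c * log (4 / 3)) := by
        gcongr
        · exact log_natCast_le_rpow_div n hε
        · exact log_four_thirds_le_abs_log_div hx hn h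
    _ = (ε * log (4 / 3))⁻¹ * (n : ℝ) ^ (ε - c) := by
        rw [rpow_sub hn]
        field_simp

lemma tsum_nat_rpow_neg_le {s : ℝ} (hs : 1 < s) :
    ∑' n : ℕ, (n : ℝ) ^ (-s) ≤ 1 + 1 / (s - 1) := by
  rw [(summable_nat_rpow.2 (by linarith)).tsum_eq_zero_add,
    Nat.cast_zero, zero_rpow (by linarith), zero_add]
  have hterms (n : ℕ) : ((n + 1 : ℕ) : ℝ) ^ (-s) = 1 / ((n : ℝ) + 1) ^ s := by
    rw [rpow_neg (by positivity), one_div]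
    push_cast
    rfl
  simp_rw [hterms]
  have hrem : 0 ≤ s * ZetaAsymptotics.termTSum s :=
    mul_nonneg (by linarith) (tsum_nonneg fun n => ZetaAsymptotics.term_nonneg _ _)
  linarith [ZetaAsymptotics.zeta_limit_aux1 hs]

lemma tsum_le_of_le_mul_rpow_neg {f : ℕ → ℝ} {C s : ℝ} (hs : 1 < s) (hf₀ : ∀ n, 0 ≤ f n)
    (hf : ∀ n, f n ≤ C * (n : ℝ) ^ (-s)) : ∑' n, f n ≤ C * (1 + 1 / (s - 1)) := by
  have hC : 0 ≤ C := by simpa using (hf₀ 1).trans (hf 1)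
  have hg : Summable fun n : ℕ => C * (n : ℝ) ^ (-s) :=
    (summable_nat_rpow.2 (by linarith)).mul_left C
  calc ∑' n, f n ≤ ∑' n : ℕ, C * (n : ℝ) ^ (-s) :=
        (hg.of_nonneg_of_le hf₀ hf).tsum_le_tsum hf hg
    _ = C * ∑' n : ℕ, (n : ℝ) ^ (-s) := tsum_mul_left
    _ ≤ C * (1 + 1 / (s - 1)) := by gcongr; exact tsum_nat_rpow_neg_le hs

theorem tail_sum_bound :
    ∃ K > (0 : ℝ), ∀ x : ℝ, 10 ≤ x →
      (∑' n : ℕ, (if (n : ℝ) ≤ 2 / 3 * x ∨ 4 / 3 * x ≤ (n : ℝ) then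
          Real.log n / ((n : ℝ) ^ (1 + 1 / Real.log x) * |Real.log (x / n)|) else 0))
        ≤ K * (Real.log x) ^ 2 := by
  refine ⟨24, by norm_num, fun x hx => ?_⟩
  have hx₀ : 0 < x := by linarith
  set L := log x
  have hL : 1 ≤ L := by
    rw [le_log_iff_exp_le hx₀]
    linarith [exp_one_lt_d9]
  have hexp : 1 / (2 * L) - (1 + 1 / L) = -(1 + 1 / (2 * L)) := by field_simp; ring
  refine (tsum_le_of_le_mul_rpow_neg (C := (1 / (2 * L) * log (4 / 3))⁻¹) (s := 1 + 1 / (2 * L))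
    (lt_add_of_pos_right 1 (by positivity)) (fun n => ?_) (fun n => ?_)).trans ?_
  · split_ifs <;> positivity
  · split_ifs with h
    · exact hexp ▸ log_div_rpow_mul_abs_log_le hx₀ (by positivity) n h
    · positivity
  have hinv : (log (4 / 3))⁻¹ ≤ 4 := by
    rw [inv_le_comm₀ (by linarith [one_quarter_le_log_four_thirds]) (by norm_num)]
    linarith [one_quarter_le_log_four_thirds]
  rw [add_sub_cancel_left, one_div_one_div, mul_inv, one_div, inv_inv]
  nlinarith [mul_le_mul_of_nonneg_left hinv (by positivity : 0 ≤ 2 * L * (1 + 2 * L))]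
end

section
/- Let t ≥ 10x ≥ 100, X := t/(2πx), Y := t^{1/2}/(2πx), and c := 1 + 1/log x. Then ∑_{n ∈ S₁} (log n)/(2πx·n^c·(|n-X|+Y)) = O((log t)·(x/t^{1/2} + 1)/t^c), where S₁ := {n ≥ 2 : |n - X| ≤ Y}, with an absolute implied constant. -/
open Real

set_option maxHeartbeats 1000000 in
theorem S1_sum_bound :
    ∃ K > (0 : ℝ), ∀ x t : ℝ, 10 ≤ x → 10 * x ≤ t →
      (∑' n : ℕ, (if 2 ≤ n ∧ |(n : ℝ) - t / (2 * π * x)| ≤ Real.sqrt t / (2 * π * x) then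
          Real.log n / (2 * π * x * (n : ℝ) ^ (1 + 1 / Real.log x) *
            (|(n : ℝ) - t / (2 * π * x)| + Real.sqrt t / (2 * π * x)))
        else 0))
        ≤ K * (Real.log t * (x / Real.sqrt t + 1) / t ^ (1 + 1 / Real.log x)) := by
  refine ⟨1000, by norm_num, ?_⟩
  intro x t hx ht
  set f : ℕ → ℝ := fun n =>
    (if 2 ≤ n ∧ |(n : ℝ) - t / (2 * π * x)| ≤ Real.sqrt t / (2 * π * x) then
          Real.log n / (2 * π * x * (n : ℝ) ^ (1 + 1 / Real.log x) *
            (|(n : ℝ) - t / (2 * π * x)| + Real.sqrt t / (2 * π * x)))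
        else 0) with hf
  have hπ4 : π ≤ 4 := Real.pi_le_four
  have hπ3 : 3 < π := Real.pi_gt_three
  have ht100 : (100 : ℝ) ≤ t := by linarith
  set A : ℝ := 2 * π * x with hAdef
  set c : ℝ := 1 + 1 / Real.log x with hcdef
  set X : ℝ := t / A with hXdef
  set Y : ℝ := Real.sqrt t / A with hYdef
  have hA : (0 : ℝ) < A := by positivity
  have hA60 : (60 : ℝ) ≤ A := by nlinarith
  have hst10 : (10 : ℝ) ≤ Real.sqrt t := by
    have : Real.sqrt 100 ≤ Real.sqrt t := Real.sqrt_le_sqrt ht100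
    rwa [show (100:ℝ) = 10 ^ 2 by norm_num, Real.sqrt_sq (by norm_num)] at this
  have hstt : Real.sqrt t * Real.sqrt t = t := Real.mul_self_sqrt (by linarith)
  have hst_le_t : Real.sqrt t ≤ t := by nlinarith
  have hlogx : 1 ≤ Real.log x := by
    rw [Real.le_log_iff_exp_le (by linarith)]
    have := Real.exp_one_lt_d9
    linarith
  have hc1 : 1 ≤ c := by
    rw [hcdef]
    have : 0 < 1 / Real.log x := by positivity
    linarith
  have hc2 : c ≤ 2 := by
    rw [hcdef]
    have : 1 / Real.log x ≤ 1 := by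
      rw [div_le_one (by linarith)]; linarith
    linarith
  have hX : 0 < X := by positivity
  have hY : 0 < Y := by positivity
  have h10t : 10 * Real.sqrt t ≤ t := by nlinarith
  have hYX : 10 * Y ≤ X := by
    rw [hYdef, hXdef, ← mul_div_assoc, div_le_div_iff₀ hA hA]
    nlinarith [mul_le_mul_of_nonneg_right h10t hA.le]
  have hXY_t : X + Y ≤ t := by
    have h1 : X ≤ t / 2 := by
      rw [hXdef, div_le_div_iff₀ hA (by norm_num)]
      nlinarith
    linarith
  have htc : (0:ℝ) < t ^ c := Real.rpow_pos_of_pos (by linarith) c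
  have hlogt : 0 ≤ Real.log t := Real.log_nonneg (by linarith)
  -- bound A ^ (c - 1) ≤ 21
  have hA21 : A ^ (1 / Real.log x) ≤ 21 := by
    have hax3 : A ≤ x ^ (3:ℝ) := by
      rw [show (3:ℝ) = ((3:ℕ):ℝ) by norm_num, Real.rpow_natCast]
      have e1 : A ≤ 8 * x := by rw [hAdef]; nlinarith
      have e2 : 100 * x ≤ x ^ 3 := by
        nlinarith [mul_le_mul_of_nonneg_right (show (100:ℝ) ≤ x ^ 2 by nlinarith)
          (show (0:ℝ) ≤ x by linarith)]
      linarith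
    have h1 : A ^ (1 / Real.log x) ≤ (x ^ (3:ℝ)) ^ (1 / Real.log x) :=
      Real.rpow_le_rpow hA.le hax3 (by positivity)
    have h2 : (x ^ (3:ℝ)) ^ (1 / Real.log x) = Real.exp 3 := by
      rw [← Real.rpow_mul (by linarith), Real.rpow_def_of_pos (by linarith)]
      congr 1
      field_simp
    have h3 : Real.exp 3 ≤ 21 := by
      have h := Real.exp_one_lt_d9
      have he : Real.exp 3 = Real.exp 1 * Real.exp 1 * Real.exp 1 := by
        rw [← Real.exp_add, ← Real.exp_add]; norm_num
      have hep := Real.exp_pos 1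
      nlinarith
    linarith [h2 ▸ h1]
  -- key: t ^ c ≤ 21 * (A * X ^ c)
  have hAXc : t ^ c ≤ 21 * (A * X ^ c) := by
    have hXc : X ^ c = t ^ c / A ^ c := by
      rw [hXdef, Real.div_rpow (by linarith) hA.le]
    have hAc : A ^ c = A ^ (1 / Real.log x) * A := by
      rw [hcdef, add_comm, Real.rpow_add_one hA.ne']
    have hApow : (0:ℝ) < A ^ (1 / Real.log x) := Real.rpow_pos_of_pos hA _
    rw [hXc, hAc]
    rw [show 21 * (A * (t ^ c / (A ^ (1 / Real.log x) * A))) =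
        21 * t ^ c / A ^ (1 / Real.log x) by field_simp]
    rw [le_div_iff₀ hApow]
    nlinarith
  -- the finite support set
  set n₀ : ℕ := ⌈X - Y⌉₊ with hn₀
  set n₁ : ℕ := ⌊X + Y⌋₊ with hn₁
  have hXA : t / (2 * π * x) = X := rfl
  have hYA : Real.sqrt t / (2 * π * x) = Y := rfl
  have hca : 1 + 1 / Real.log x = c := rfl
  have hsupp : ∀ n ∉ Finset.Icc n₀ n₁, f n = 0 := by
    intro n hn
    rw [Finset.mem_Icc] at hn
    push_neg at hn
    rw [hf]
    simp only [hXA, hYA, hca]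
    rw [if_neg]
    rintro ⟨-, habs⟩
    rw [abs_le] at habs
    rcases le_or_gt n₀ n with h0 | h0
    · have h1 := hn h0
      have : X + Y < (n : ℝ) := (Nat.floor_lt (by positivity)).mp h1
      linarith [habs.2]
    · have : (n : ℝ) < X - Y := Nat.lt_ceil.mp h0
      linarith [habs.1]
  set B : ℝ := 42 * Real.log t / (t ^ c * Y) with hB
  have hB0 : 0 ≤ B := by positivity
  have hterm : ∀ n ∈ Finset.Icc n₀ n₁, f n ≤ B := by
    intro n _
    rw [hf]
    simp only [hXA, hYA, hca]
    split_ifs with hcond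
    · obtain ⟨h2n, habs⟩ := hcond
      have h2R : (2:ℝ) ≤ (n:ℝ) := by exact_mod_cast h2n
      rw [abs_le] at habs
      have hnX1 : X - Y ≤ (n:ℝ) := by linarith [habs.1]
      have hnX2 : (n:ℝ) ≤ X + Y := by linarith [habs.2]
      have hnpos : (0:ℝ) < (n:ℝ) := by linarith
      have hXc0 : (0:ℝ) ≤ X ^ c := (Real.rpow_pos_of_pos hX c).le
      have hnc : X ^ c / 2 ≤ (n:ℝ) ^ c := by
        have h45 : (4/5 : ℝ) * X ≤ (n:ℝ) := by linarith
        have h1 : ((4/5:ℝ) * X) ^ c ≤ (n:ℝ) ^ c :=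
          Real.rpow_le_rpow (by positivity) h45 (by linarith)
        rw [Real.mul_rpow (by norm_num) hX.le] at h1
        have h2 : (1/2 : ℝ) ≤ (4/5:ℝ) ^ c := by
          have ha : (4/5:ℝ) ^ c ≥ (4/5:ℝ) ^ (2:ℝ) :=
            Real.rpow_le_rpow_of_exponent_ge (by norm_num) (by norm_num) hc2
          have hb : (4/5:ℝ) ^ (2:ℝ) = 16/25 := by
            rw [show (2:ℝ) = ((2:ℕ):ℝ) by norm_num, Real.rpow_natCast]
            norm_num
          rw [hb] at ha
          linarith
        nlinarith
      have hlogn : Real.log n ≤ Real.log t := Real.log_le_log hnpos (by linarith)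
      have hlogn0 : 0 ≤ Real.log n := Real.log_nonneg (by linarith)
      have hncpos : (0:ℝ) < (n:ℝ) ^ c := Real.rpow_pos_of_pos hnpos c
      have habs0 : (0:ℝ) ≤ |(n:ℝ) - X| := abs_nonneg _
      have hDpos : (0:ℝ) < A * (n:ℝ) ^ c * (|(n:ℝ) - X| + Y) := by positivity
      have hDlb : t ^ c * Y / 42 ≤ A * (n:ℝ) ^ c * (|(n:ℝ) - X| + Y) := by
        have h1 : t ^ c / 42 ≤ A * (n:ℝ) ^ c := by
          nlinarith [mul_le_mul_of_nonneg_left hnc hA.le]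
        have h2 : A * (n:ℝ) ^ c * Y ≤ A * (n:ℝ) ^ c * (|(n:ℝ) - X| + Y) := by
          nlinarith
        calc t ^ c * Y / 42 = t ^ c / 42 * Y := by ring
          _ ≤ A * (n:ℝ) ^ c * Y := mul_le_mul_of_nonneg_right h1 hY.le
          _ ≤ _ := h2
      rw [hB, div_le_div_iff₀ hDpos (by positivity)]
      have h3 : Real.log n * (t ^ c * Y) ≤ Real.log t * (t ^ c * Y) :=
        mul_le_mul_of_nonneg_right hlogn (mul_nonneg htc.le hY.le)
      have h5 : 42 * Real.log t * (t ^ c * Y / 42) ≤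
          42 * Real.log t * (A * (n:ℝ) ^ c * (|(n:ℝ) - X| + Y)) :=
        mul_le_mul_of_nonneg_left hDlb (by positivity)
      linarith [h3, h5]
    · exact hB0
  have hsum : (∑' n : ℕ, f n) ≤ (Finset.Icc n₀ n₁).card * B := by
    rw [tsum_eq_sum hsupp]
    have := Finset.sum_le_card_nsmul _ _ _ hterm
    rwa [nsmul_eq_mul] at this
  have hcard : ((Finset.Icc n₀ n₁).card : ℝ) ≤ 2 * Y + 2 := by
    rw [Nat.card_Icc]
    rcases le_or_gt n₀ (n₁ + 1) with h | h
    · rw [Nat.cast_sub h]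
      have h1 : (n₁ : ℝ) ≤ X + Y := Nat.floor_le (by positivity)
      have h2 : X - Y ≤ (n₀ : ℝ) := Nat.le_ceil _
      push_cast
      linarith
    · rw [Nat.sub_eq_zero_of_le h.le]
      simp only [Nat.cast_zero]
      positivity
  have hfinal : (2 * Y + 2) * B ≤ 1000 * (Real.log t * (x / Real.sqrt t + 1) / t ^ c) := by
    have hstpos : (0:ℝ) < Real.sqrt t := by linarith
    have hxYst : (x / Real.sqrt t + 1) * Y = 1 / (2 * π) + Y := by
      rw [hYdef, hAdef]
      field_simp
    have h125 : (125:ℝ) ≤ 1000 * (1 / (2 * π)) := by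
      rw [show 1000 * (1 / (2*π)) = 1000 / (2*π) by ring, le_div_iff₀ (by positivity)]
      nlinarith
    have h1 : (2 * Y + 2) * 42 ≤ 1000 * ((x / Real.sqrt t + 1) * Y) := by
      rw [hxYst]
      nlinarith
    rw [show (2 * Y + 2) * B = ((2*Y+2) * (42 * Real.log t)) / (t ^ c * Y) by rw [hB]; ring,
        show 1000 * (Real.log t * (x / Real.sqrt t + 1) / t ^ c) =
          (1000 * (Real.log t * (x / Real.sqrt t + 1))) / t ^ c by ring,
        div_le_div_iff₀ (by positivity) htc]
    have h2 := mul_le_mul_of_nonneg_right h1 (mul_nonneg hlogt htc.le)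
    linarith [h2]
  calc (∑' n : ℕ, f n) ≤ (Finset.Icc n₀ n₁).card * B := hsum
    _ ≤ (2 * Y + 2) * B := mul_le_mul_of_nonneg_right hcard hB0
    _ ≤ 1000 * (Real.log t * (x / Real.sqrt t + 1) / t ^ c) := hfinal
end

section
/- Let t ≥ 10x ≥ 100, X := t/(2πx), c := 1 + 1/log x, and S₃ := {n ≥ 2 : |n - X| > 2X}. Then ∑_{n ∈ S₃} (log n)/(2πx·n^c·(|n-X| + t^{1/2}/(2πx))) = O((log t)/t^c), with an absolute implied constant. -/
open Real

/-! For `n ∈ S₃` one has `n > 3X`, so the last factor of the denominator is at least `2n/3`.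
With `M = 3X` and `ε = 1/log x`, the estimate `log (y/M) ≤ (y/M)^ε/ε` absorbs the logarithm:
`log n / n^ε ≤ (log M + log x) / M^ε` for `n ≥ M`, and what remains is the tail
`∑_{n > M} n⁻² ≤ 2/M`. Since `2πx · M = 3t`, the sum is at most `(log M + log x) / (M^ε t)`, and
`(t/M)^ε ≤ (x²)^(1/log x) = e²` converts `M^ε` into `t^ε`. -/

theorem three_mul_lt_of_two_mul_lt_abs_sub {X y : ℝ} (hy : 0 ≤ y) (h : 2 * X < |y - X|) :
    3 * X < y := by
  rcases lt_abs.mp h with h | h <;> linarith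

theorem log_div_rpow_le_of_le {M y ε : ℝ} (hM : 1 ≤ M) (hMy : M ≤ y) (hε : 0 < ε) :
    log y / y ^ ε ≤ (log M + ε⁻¹) / M ^ ε := by
  have hM0 : 0 < M := by linarith
  have hy0 : 0 < y := by linarith
  have hr : 1 ≤ y / M := (one_le_div hM0).mpr hMy
  have hr' : 1 ≤ (y / M) ^ ε := one_le_rpow hr hε.le
  have hlog : log y ≤ (log M + ε⁻¹) * (y / M) ^ ε := calc
    log y = log M + log (y / M) := by rw [← log_mul hM0.ne' (by positivity)]; field_simp
    _ ≤ log M * (y / M) ^ ε + (y / M) ^ ε / ε := by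
      gcongr
      · exact le_mul_of_one_le_right (log_nonneg hM) hr'
      · exact log_le_rpow_div (by positivity) hε
    _ = (log M + ε⁻¹) * (y / M) ^ ε := by ring
  rw [div_rpow hy0.le hM0.le] at hlog
  rw [div_le_div_iff₀ (by positivity) (by positivity)]
  calc log y * M ^ ε ≤ (log M + ε⁻¹) * (y ^ ε / M ^ ε) * M ^ ε := by gcongr
    _ = (log M + ε⁻¹) * y ^ ε := by field_simp

theorem S3_term_le {D X s ε y : ℝ} (hD : 0 < D) (hs : 0 ≤ s) (hε : 0 < ε) (hX : 1 ≤ 3 * X)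
    (hy : 3 * X < y) :
    log y / (D * y ^ (1 + ε) * (|y - X| + s)) ≤
      3 / (2 * D) * ((log (3 * X) + ε⁻¹) / (3 * X) ^ ε) * (y ^ 2)⁻¹ := by
  have hy0 : 0 < y := by linarith
  have hden : 2 / 3 * y ≤ |y - X| + s := by linarith [le_abs_self (y - X)]
  have hpow : y ^ (1 + ε) = y * y ^ ε := by rw [rpow_add hy0, rpow_one]
  calc log y / (D * y ^ (1 + ε) * (|y - X| + s))
      ≤ log y / (D * y ^ (1 + ε) * (2 / 3 * y)) := by
        gcongr
        exact log_nonneg (by linarith)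
    _ = 3 / (2 * D) * (log y / y ^ ε) * (y ^ 2)⁻¹ := by rw [hpow]; field_simp
    _ ≤ 3 / (2 * D) * ((log (3 * X) + ε⁻¹) / (3 * X) ^ ε) * (y ^ 2)⁻¹ := by
        gcongr 3 / (2 * D) * ?_ * _
        exact log_div_rpow_le_of_le hX hy.le hε

theorem sum_ite_lt_inv_sq_le {M : ℝ} (hM : 0 < M) (s : Finset ℕ) :
    ∑ n ∈ s, (if M < n then ((n : ℝ) ^ 2)⁻¹ else 0) ≤ 2 / M := by
  have hsub : s.filter (fun n : ℕ => M < n) ⊆ Finset.Ioo ⌊M⌋₊ (s.sup id + 1) := fun n hn => by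
    rw [Finset.mem_filter] at hn
    exact Finset.mem_Ioo.mpr
      ⟨(Nat.floor_lt hM.le).mpr hn.2, Nat.lt_succ_of_le (Finset.le_sup (f := id) hn.1)⟩
  calc ∑ n ∈ s, (if M < n then ((n : ℝ) ^ 2)⁻¹ else 0)
      = ∑ n ∈ s.filter (fun n : ℕ => M < n), ((n : ℝ) ^ 2)⁻¹ := (Finset.sum_filter _ _).symm
    _ ≤ ∑ n ∈ Finset.Ioo ⌊M⌋₊ (s.sup id + 1), ((n : ℝ) ^ 2)⁻¹ :=
      Finset.sum_le_sum_of_subset_of_nonneg hsub fun _ _ _ => by positivity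
    _ ≤ 2 / (⌊M⌋₊ + 1) := sum_Ioo_inv_sq_le _ _
    _ ≤ 2 / M := by gcongr; exact (Nat.lt_floor_add_one M).le

theorem S3_tsum_le {D X s ε : ℝ} (hD : 0 < D) (hs : 0 ≤ s) (hε : 0 < ε) (hX : 1 ≤ 3 * X) :
    ∑' n : ℕ, (if 2 ≤ n ∧ 2 * X < |(n : ℝ) - X| then
        log n / (D * (n : ℝ) ^ (1 + ε) * (|(n : ℝ) - X| + s)) else 0) ≤
      3 / (2 * D) * ((log (3 * X) + ε⁻¹) / (3 * X) ^ ε) * (2 / (3 * X)) := by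
  set C := 3 / (2 * D) * ((log (3 * X) + ε⁻¹) / (3 * X) ^ ε)
  have hC : 0 ≤ C := by have := log_nonneg hX; positivity
  have hterm : ∀ n : ℕ, (if 2 ≤ n ∧ 2 * X < |(n : ℝ) - X| then
      log n / (D * (n : ℝ) ^ (1 + ε) * (|(n : ℝ) - X| + s)) else 0) ≤
      C * (if 3 * X < n then ((n : ℝ) ^ 2)⁻¹ else 0) := fun n => by
    split_ifs with hS h3
    · exact S3_term_le hD hs hε hX h3
    · exact absurd (three_mul_lt_of_two_mul_lt_abs_sub (Nat.cast_nonneg n) hS.2) h3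
    · positivity
    · simp
  refine Real.tsum_le_of_sum_le (fun n => by dsimp only; split_ifs <;> positivity) fun u => ?_
  calc _ ≤ ∑ n ∈ u, C * (if 3 * X < n then ((n : ℝ) ^ 2)⁻¹ else 0) :=
        Finset.sum_le_sum fun n _ => hterm n
    _ = C * ∑ n ∈ u, (if 3 * X < n then ((n : ℝ) ^ 2)⁻¹ else 0) := (Finset.mul_sum _ _ _).symm
    _ ≤ C * (2 / (3 * X)) := by gcongr; exact sum_ite_lt_inv_sq_le (by linarith) u

theorem rpow_inv_log_le_exp_of_le_pow {b x : ℝ} (k : ℕ) (hb : 0 ≤ b) (hx : 1 < x)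
    (hbx : b ≤ x ^ k) :
    b ^ (log x)⁻¹ ≤ exp k := calc
  b ^ (log x)⁻¹ ≤ (x ^ k) ^ (log x)⁻¹ := by gcongr; exact inv_nonneg.mpr (log_nonneg hx.le)
  _ = exp k := by
    rw [← rpow_pow_comm (by linarith), rpow_inv_log (by linarith) hx.ne', ← exp_nat_mul, mul_one]

theorem log_add_log_div_rpow_div_le {x t M : ℝ} (hx : 1 < x) (hM : 1 ≤ M) (hMt : M ≤ t)
    (hxt : x ≤ t) (htM : t ≤ x ^ 2 * M) :
    (log M + log x) / M ^ (log x)⁻¹ / t ≤ 2 * exp 2 * (log t / t ^ (1 + (log x)⁻¹)) := by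
  have hM0 : 0 < M := by linarith
  have ht0 : 0 < t := by linarith
  have htM' : t ^ (log x)⁻¹ ≤ exp 2 * M ^ (log x)⁻¹ := by
    have hratio : (t / M) ^ (log x)⁻¹ ≤ exp (2 : ℕ) :=
      rpow_inv_log_le_exp_of_le_pow 2 (by positivity) hx ((div_le_iff₀ hM0).mpr htM)
    rw [div_rpow ht0.le hM0.le, div_le_iff₀ (by positivity)] at hratio
    exact_mod_cast hratio
  have hlog : log M + log x ≤ 2 * log t := by
    linarith [log_le_log hM0 hMt, log_le_log (by linarith) hxt]
  have hlogt : 0 ≤ log t := log_nonneg (by linarith)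
  calc (log M + log x) / M ^ (log x)⁻¹ / t ≤ 2 * log t / M ^ (log x)⁻¹ / t := by gcongr
    _ = 2 * exp 2 * (log t / (t * (exp 2 * M ^ (log x)⁻¹))) := by field_simp
    _ ≤ 2 * exp 2 * (log t / (t * t ^ (log x)⁻¹)) := by gcongr
    _ = 2 * exp 2 * (log t / t ^ (1 + (log x)⁻¹)) := by rw [rpow_add ht0, rpow_one]

theorem S3_sum_bound :
    ∃ K > (0 : ℝ), ∀ x t : ℝ, 10 ≤ x → 10 * x ≤ t →
      (∑' n : ℕ, (if 2 ≤ n ∧ 2 * (t / (2 * π * x)) < |(n : ℝ) - t / (2 * π * x)| then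
          Real.log n / (2 * π * x * (n : ℝ) ^ (1 + 1 / Real.log x) *
            (|(n : ℝ) - t / (2 * π * x)| + Real.sqrt t / (2 * π * x)))
        else 0))
        ≤ K * (Real.log t / t ^ (1 + 1 / Real.log x)) := by
  refine ⟨2 * exp 2, by positivity, fun x t hx ht => ?_⟩
  have hlogx : 1 < log x := by rw [lt_log_iff_exp_lt (by linarith)]; linarith [exp_one_lt_d9]
  set D := 2 * π * x
  have hD : 0 < D := by positivity
  have hD3 : 3 ≤ D := by nlinarith [pi_gt_three]
  have hDx : D ≤ 3 * x ^ 2 := by nlinarith [pi_lt_d2]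
  have hDt : D ≤ 3 * t := by nlinarith [pi_lt_d2]
  have h3X : 3 * (t / D) = 3 * t / D := by ring
  have hX : 1 ≤ 3 * (t / D) := by rw [h3X, le_div_iff₀ hD]; linarith
  simp only [one_div]
  calc _ ≤ 3 / (2 * D) * ((log (3 * (t / D)) + log x) / (3 * (t / D)) ^ (log x)⁻¹) *
          (2 / (3 * (t / D))) := by
        simpa only [inv_inv] using
          S3_tsum_le (s := √t / D) (ε := (log x)⁻¹) hD (by positivity) (by positivity) hX
    _ = (log (3 * (t / D)) + log x) / (3 * (t / D)) ^ (log x)⁻¹ / t := by field_simp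
    _ ≤ 2 * exp 2 * (log t / t ^ (1 + (log x)⁻¹)) := by
      refine log_add_log_div_rpow_div_le (by linarith) hX ?_ (by linarith) ?_
      · rw [h3X, div_le_iff₀ hD]; nlinarith
      · rw [h3X]; field_simp; nlinarith
end

section
/- Assume ∑_{n ≤ u} Λ(n) = u + O(u^{1/2}·log² u) for u ≥ 2 (von Koch's RH bound). Let t > t' ≥ 10, Δ' := t - t', and e ≤ κ ≤ t/e. Then ∑_{b ≤ κ} ∑_{t'/b < a ≤ t/b, a > t/κ} Λ(a) = O(Δ'·log κ + (tκ)^{1/2}·log² t), with an absolute implied constant. -/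
/-!
The constraint `t / κ < a` makes each inner sum a difference of Chebyshev functions,
`ψ (t / b) - ψ (max (t' / b) (t / κ))`, with both arguments at least `e`. Von Koch's bound turns
this into `Δ' / b + O(√(t / b) log² t)`, and summing over `b ≤ κ` with `∑ 1 / b ≤ 1 + log κ`
and `∑ 1 / √b ≤ 2 √κ` gives the claim.
-/

open ArithmeticFunction Finset Real Chebyshev

theorem Chebyshev.psi_eq_sum_Icc_one (x : ℝ) : ψ x = ∑ n ∈ Icc 1 ⌊x⌋₊, Λ n := by
  rw [psi, ← Icc_add_one_left_eq_Ioc, zero_add]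

theorem Chebyshev.sum_Icc_ite_lt_eq_psi_sub {x y : ℝ} (hx : 0 ≤ x) (hxy : x ≤ y) :
    ∑ a ∈ Icc 1 ⌊y⌋₊, (if x < a then Λ a else 0) = ψ y - ψ x := by
  have hfilter : (Icc 1 ⌊y⌋₊).filter (fun a : ℕ ↦ x < a) = Ioc ⌊x⌋₊ ⌊y⌋₊ := by
    ext a
    simp only [mem_filter, mem_Icc, mem_Ioc, ← Nat.floor_lt hx]
    omega
  rw [← sum_filter, hfilter, psi, psi,
    ← sum_Ioc_consecutive _ (Nat.zero_le _) (Nat.floor_le_floor hxy), add_sub_cancel_left]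

theorem sum_Icc_inv_le_one_add_log {y : ℝ} (hy : 1 ≤ y) :
    ∑ b ∈ Icc 1 ⌊y⌋₊, (b : ℝ)⁻¹ ≤ 1 + Real.log y := by
  have hfloor : (0 : ℝ) < ⌊y⌋₊ := by exact_mod_cast Nat.floor_pos.mpr hy
  calc ∑ b ∈ Icc 1 ⌊y⌋₊, (b : ℝ)⁻¹ = harmonic ⌊y⌋₊ := by simp [harmonic_eq_sum_Icc]
    _ ≤ 1 + Real.log ⌊y⌋₊ := harmonic_le_one_add_log _
    _ ≤ 1 + Real.log y := by gcongr; exact Nat.floor_le (by linarith)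

theorem inv_sqrt_add_one_le {x : ℝ} (hx : 0 ≤ x) : (√(x + 1))⁻¹ ≤ 2 * (√(x + 1) - √x) := by
  have hpos : 0 < √(x + 1) := sqrt_pos.mpr (by linarith)
  have hmono : √x ≤ √(x + 1) := sqrt_le_sqrt (by linarith)
  have hsq : (√(x + 1) - √x) * (√(x + 1) + √x) = 1 := by
    ring_nf; rw [sq_sqrt hx, sq_sqrt (by linarith)]; ring
  rw [inv_le_iff_one_le_mul₀ hpos]
  nlinarith

theorem sum_Icc_inv_sqrt_le (n : ℕ) : ∑ b ∈ Icc 1 n, (√b)⁻¹ ≤ 2 * √n := by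
  induction n with
  | zero => simp
  | succ n ih =>
    rw [sum_Icc_succ_top (by omega)]
    have := inv_sqrt_add_one_le n.cast_nonneg
    push_cast
    linarith

theorem sum_Icc_floor_inv_sqrt_le {y : ℝ} (hy : 0 ≤ y) :
    ∑ b ∈ Icc 1 ⌊y⌋₊, (√b)⁻¹ ≤ 2 * √y :=
  (sum_Icc_inv_sqrt_le _).trans (by gcongr; exact Nat.floor_le hy)

def VonKochBound (K : ℝ) : Prop :=
  ∀ u : ℝ, 2 ≤ u → |ψ u - u| ≤ K * √u * Real.log u ^ 2

namespace VonKochBound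

variable {K : ℝ}

theorem nonneg (hK : VonKochBound K) : 0 ≤ K := by
  have hpos : 0 < √2 * Real.log 2 ^ 2 := by positivity
  have := (abs_nonneg _).trans (hK 2 le_rfl)
  rw [mul_assoc] at this
  exact nonneg_of_mul_nonneg_left this hpos

theorem abs_psi_sub_psi_le (hK : VonKochBound K) {x y : ℝ} (hx : 2 ≤ x) (hxy : x ≤ y) :
    |ψ y - ψ x| ≤ (y - x) + 2 * K * √y * Real.log y ^ 2 := by
  have hxy_err : K * √x * Real.log x ^ 2 ≤ K * √y * Real.log y ^ 2 := by
    have := hK.nonneg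
    have : 0 ≤ Real.log x := log_nonneg (by linarith)
    gcongr
  have hy := hK y (by linarith)
  have hx := hK x hx
  rw [abs_le] at hx hy ⊢
  constructor <;> linarith

theorem abs_sum_large_a_le (hK : VonKochBound K) {t t' κ : ℝ} {b : ℕ}
    (htt : t' ≤ t) (htκ : 2 ≤ t / κ) (hb : 1 ≤ b) (hbκ : (b : ℝ) ≤ κ) :
    |∑ a ∈ Icc 1 ⌊t / b⌋₊, (if t' / b < (a : ℝ) ∧ t / κ < (a : ℝ) then Λ a else 0)|
      ≤ (t - t') * (b : ℝ)⁻¹ + 2 * K * √t * Real.log t ^ 2 * (√b)⁻¹ := by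
  have hb0 : (0 : ℝ) < b := by exact_mod_cast hb
  have ht : 0 ≤ t := by
    have := (le_div_iff₀ (hb0.trans_le hbκ)).mp htκ
    linarith
  set x := max (t' / b) (t / κ)
  have hx : 2 ≤ x := htκ.trans (le_max_right _ _)
  have hxy : x ≤ t / b := max_le (by gcongr) (div_le_div_of_nonneg_left ht hb0 hbκ)
  have hyt : t / b ≤ t := div_le_self ht (by exact_mod_cast hb)
  have hmain : t / b - x ≤ (t - t') * (b : ℝ)⁻¹ := by
    have : t' / b ≤ x := le_max_left _ _
    rw [← div_eq_mul_inv, sub_div]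
    linarith
  have herr : 2 * K * √(t / b) * Real.log (t / b) ^ 2 ≤ 2 * K * √t * Real.log t ^ 2 * (√b)⁻¹ := by
    have := hK.nonneg
    have : 0 ≤ Real.log (t / b) := Real.log_nonneg (by linarith)
    calc 2 * K * √(t / b) * Real.log (t / b) ^ 2 ≤ 2 * K * √(t / b) * Real.log t ^ 2 := by
          gcongr; linarith
      _ = 2 * K * √t * Real.log t ^ 2 * (√b)⁻¹ := by rw [Real.sqrt_div' _ hb0.le]; ring
  simp_rw [← max_lt_iff]
  rw [sum_Icc_ite_lt_eq_psi_sub (by linarith) hxy]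
  linarith [hK.abs_psi_sub_psi_le hx hxy]

end VonKochBound

theorem large_a_sum_bound (K : ℝ)
    (hyp : ∀ u : ℝ, 2 ≤ u →
      |(∑ n ∈ Finset.Icc 1 ⌊u⌋₊, Λ n) - u| ≤ K * Real.sqrt u * (Real.log u) ^ 2) :
    ∃ K' > (0 : ℝ), ∀ t t' κ : ℝ, 10 ≤ t' → t' < t →
      Real.exp 1 ≤ κ → κ ≤ t / Real.exp 1 →
      |∑ b ∈ Finset.Icc 1 ⌊κ⌋₊, ∑ a ∈ Finset.Icc 1 ⌊t / (b : ℝ)⌋₊,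
          (if t' / (b : ℝ) < (a : ℝ) ∧ t / κ < (a : ℝ) then Λ a else 0)|
        ≤ K' * ((t - t') * Real.log κ + Real.sqrt (t * κ) * (Real.log t) ^ 2) := by
  have hK : VonKochBound K := fun u hu ↦ by simpa only [psi_eq_sum_Icc_one] using hyp u hu
  refine ⟨4 * K + 2, by linarith [hK.nonneg], fun t t' κ _ htt hκ hκt ↦ ?_⟩
  have he : 2 ≤ Real.exp 1 := by linarith [Real.add_one_le_exp (1 : ℝ)]
  have hκ0 : 0 < κ := by linarith
  have htκ : 2 ≤ t / κ := he.trans ((le_div_comm₀ hκ0 (Real.exp_pos 1)).mp hκt)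
  have hlogκ : 1 ≤ Real.log κ := (Real.le_log_iff_exp_le hκ0).mpr hκ
  have hΔ : 0 ≤ t - t' := by linarith
  set B := 2 * K * √t * Real.log t ^ 2
  have hB : 0 ≤ B := by have := hK.nonneg; positivity
  calc _ ≤ ∑ b ∈ Icc 1 ⌊κ⌋₊, ((t - t') * (b : ℝ)⁻¹ + B * (√b)⁻¹) :=
        (abs_sum_le_sum_abs _ _).trans <| sum_le_sum fun b hb ↦
          hK.abs_sum_large_a_le htt.le htκ (mem_Icc.mp hb).1
            ((Nat.le_floor_iff hκ0.le).mp (mem_Icc.mp hb).2)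
    _ = (t - t') * ∑ b ∈ Icc 1 ⌊κ⌋₊, (b : ℝ)⁻¹ + B * ∑ b ∈ Icc 1 ⌊κ⌋₊, (√b)⁻¹ := by
        rw [sum_add_distrib, mul_sum, mul_sum]
    _ ≤ (t - t') * (1 + Real.log κ) + B * (2 * √κ) := by
        gcongr
        · exact sum_Icc_inv_le_one_add_log (by linarith)
        · exact sum_Icc_floor_inv_sqrt_le hκ0.le
    _ ≤ _ := by
        -- `1 ≤ log κ` absorbs the stray `t - t'` into `(t - t') * log κ`
        rw [Real.sqrt_mul (by linarith)]
        nlinarith [mul_le_mul_of_nonneg_left hlogκ hΔ, mul_nonneg hK.nonneg (mul_nonneg hΔ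
          (by linarith : (0 : ℝ) ≤ Real.log κ)), mul_nonneg (mul_nonneg (Real.sqrt_nonneg t)
          (Real.sqrt_nonneg κ)) (sq_nonneg (Real.log t))]
end
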